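/- Let C ⊂ ℝ³ be a C² injective compact curve. Then there exists ε > 0 such that: (i) every x ∈ ℝ³ with infDist x C < ε has a unique nearest point y ∈ C (i.e. a unique y ∈ C with dist x y = infDist x C); and (ii) the nearest-point assignment is continuous: for every such x with nearest point y and every δ > 0 there exists ρ > 0 such that whenever x' ∈ ℝ³ satisfies dist x' x < ρ and y' ∈ C satisfies dist x' y' = infDist x' C, one has dist y' y < δ. -/

import Mathlib

/-! On a parameter window shorter than the inverse curvature, `u ↦ ‖γ u - x‖ ^ 2` has second
derivative `2 (1 + ⟪γ u - x, γ'' u⟫) > 0` once `x` is near the curve, so it has at most one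
minimiser there. Two nearest points of `x` therefore have far-apart parameters; by injectivity and
compactness their images are then a fixed distance apart, which is impossible for `x` close enough
to the curve. Continuity of the nearest point follows from its uniqueness by compactness alone. -/

open MeasureTheory Metric Set Filter
open scoped RealInnerProductSpace ContDiff SchwartzMap

noncomputable section

abbrev E3 := EuclideanSpace ℝ (Fin 3)

theorem IsCompact.exists_pos_nearest_dist_lt {α : Type*} [MetricSpace α] {C : Set α}
    (hC : IsCompact C) {x y : α} (huniq : ∀ z ∈ C, dist x z = infDist x C → z = y)
    {δ : ℝ} (hδ : 0 < δ) :
    ∃ ρ > 0, ∀ x', dist x' x < ρ → ∀ y' ∈ C, dist x' y' = infDist x' C → dist y' y < δ := by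
  set F := C \ ball y δ
  rcases F.eq_empty_or_nonempty with hF | hF
  · refine ⟨1, one_pos, fun x' _ y' hy' _ => ?_⟩
    by_contra h
    exact (eq_empty_iff_forall_notMem.1 hF) y' ⟨hy', h⟩
  obtain ⟨z, hzF, hxz⟩ := (hC.diff isOpen_ball).exists_infDist_eq_dist hF x
  have hgap : infDist x C < infDist x F := by
    refine (infDist_le_infDist_of_subset sdiff_subset hF).lt_of_ne fun h => hzF.2 ?_
    rw [huniq z hzF.1 (by rw [← hxz, h])]
    exact mem_ball_self hδ
  refine ⟨(infDist x F - infDist x C) / 2, by linarith, fun x' hx' y' hy' hxy' => ?_⟩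
  by_contra h
  have hy'F : y' ∈ F := ⟨hy', h⟩
  have := calc
    infDist x F ≤ dist x y' := infDist_le_dist_of_mem hy'F
    _ ≤ dist x' x + dist x' y' := dist_triangle_left x y' x'
    _ ≤ dist x' x + (infDist x C + dist x' x) := by
      rw [hxy']; gcongr; exact infDist_le_infDist_add_dist
  linarith

theorem Set.InjOn.exists_pos_le_dist_image {α β : Type*} [MetricSpace α] [MetricSpace β]
    {f : α → β} {S : Set α} (hS : IsCompact S) (hf : ContinuousOn f S) (hinj : InjOn f S)
    {δ : ℝ} (hδ : 0 < δ) :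
    ∃ c > 0, ∀ s ∈ S, ∀ t ∈ S, δ ≤ dist s t → c ≤ dist (f s) (f t) := by
  set T := S ×ˢ S ∩ {p : α × α | δ ≤ dist p.1 p.2}
  have hT : IsCompact T :=
    (hS.prod hS).inter_right (isClosed_le continuous_const continuous_dist)
  rcases T.eq_empty_or_nonempty with hTe | hTne
  · refine ⟨1, one_pos, fun s hs t ht hst => ?_⟩
    exact absurd ⟨(s, t), ⟨hs, ht⟩, hst⟩ (not_nonempty_iff_eq_empty.2 hTe)
  have hg : ContinuousOn (fun p : α × α => dist (f p.1) (f p.2)) T :=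
    continuous_dist.comp_continuousOn <|
      (hf.comp continuousOn_fst fun _ (hp : _ ∈ T) => hp.1.1).prodMk
        (hf.comp continuousOn_snd fun _ (hp : _ ∈ T) => hp.1.2)
  obtain ⟨p, ⟨⟨hp₁, hp₂⟩, hpδ⟩, hpmin⟩ := hT.exists_isMinOn hTne hg
  refine ⟨dist (f p.1) (f p.2), dist_pos.2 fun h => ?_, fun s hs t ht hst =>
    isMinOn_iff.1 hpmin (s, t) ⟨⟨hs, ht⟩, hst⟩⟩
  have : dist p.1 p.2 = 0 := by rw [hinj hp₁ hp₂ h, dist_self]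
  exact (hδ.trans_le hpδ).ne' this

variable {E : Type*} [NormedAddCommGroup E] [InnerProductSpace ℝ E]

theorem strictConvexOn_norm_sub_sq {γ : ℝ → E} (hγ : ContDiff ℝ 2 γ) {I : Set ℝ}
    (hI : Convex ℝ I) (x : E)
    (hcurv : ∀ u ∈ interior I, ‖γ u - x‖ * ‖deriv^[2] γ u‖ < ‖deriv γ u‖ ^ 2) :
    StrictConvexOn ℝ I (fun u => ‖γ u - x‖ ^ 2) := by
  have hγ₁ : Differentiable ℝ γ := hγ.differentiable (by norm_num)
  have hγ₂ : Differentiable ℝ (deriv γ) :=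
    (hγ.iterate_deriv' 1 1).differentiable (by norm_num)
  have hderiv : deriv (fun u => ‖γ u - x‖ ^ 2) = fun u => 2 * ⟪γ u - x, deriv γ u⟫ :=
    funext fun u => ((hγ₁ u).hasDerivAt.sub_const x).norm_sq.deriv
  refine strictConvexOn_of_deriv2_pos hI
    ((hγ₁.continuous.sub continuous_const).norm.pow 2).continuousOn fun u hu => ?_
  have hderiv2 : deriv^[2] (fun u => ‖γ u - x‖ ^ 2) u =
      2 * (‖deriv γ u‖ ^ 2 + ⟪γ u - x, deriv^[2] γ u⟫) := by
    simp only [Function.iterate_succ, Function.iterate_zero, Function.id_comp,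
      Function.comp_apply, hderiv]
    rw [(((hγ₁ u).hasDerivAt.sub_const x).inner ℝ (hγ₂ u).hasDerivAt).const_mul 2 |>.deriv,
      real_inner_self_eq_norm_sq, add_comm]
  rw [hderiv2]
  have := neg_le_of_abs_le (abs_real_inner_le_norm (γ u - x) (deriv^[2] γ u))
  linarith [hcurv u hu]

theorem eq_of_isMinOn_dist_uIcc {γ : ℝ → E} (hγ : ContDiff ℝ 2 γ) {x : E} {s t K : ℝ}
    (hunit : ∀ u ∈ uIcc s t, ‖deriv γ u‖ = 1) (hK : ∀ u ∈ uIcc s t, ‖deriv^[2] γ u‖ ≤ K)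
    (hsmall : (dist (γ s) x + |t - s|) * K < 1)
    (hs : IsMinOn (fun u => dist (γ u) x) (uIcc s t) s)
    (ht : IsMinOn (fun u => dist (γ u) x) (uIcc s t) t) : s = t := by
  have hlip : ∀ u ∈ uIcc s t, ‖γ u - γ s‖ ≤ |t - s| := fun u hu => by
    have := Convex.norm_image_sub_le_of_norm_hasDerivWithin_le
      (fun v _ => ((hγ.differentiable (by norm_num)) v).hasDerivAt.hasDerivWithinAt)
      (fun v hv => (hunit v hv).le) (convex_uIcc s t) left_mem_uIcc hu
    rw [one_mul, Real.norm_eq_abs] at this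
    exact this.trans (abs_sub_left_of_mem_uIcc hu)
  have hconv : StrictConvexOn ℝ (uIcc s t) (fun u => ‖γ u - x‖ ^ 2) := by
    refine strictConvexOn_norm_sub_sq hγ (convex_uIcc s t) x fun u hu => ?_
    have hu' := interior_subset hu
    have hdist : ‖γ u - x‖ ≤ dist (γ s) x + |t - s| := by
      rw [dist_eq_norm]
      linarith [norm_sub_le_norm_sub_add_norm_sub (γ u) (γ s) x, hlip u hu']
    rw [hunit u hu', one_pow]
    exact (mul_le_mul hdist (hK u hu') (norm_nonneg _) (by positivity)).trans_lt hsmall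
  have hsq {v : ℝ} (hv : IsMinOn (fun u => dist (γ u) x) (uIcc s t) v) :
      IsMinOn (fun u => ‖γ u - x‖ ^ 2) (uIcc s t) v :=
    isMinOn_iff.2 fun u hu => by
      simp only [← dist_eq_norm]
      exact pow_le_pow_left₀ dist_nonneg (isMinOn_iff.1 hv u hu) 2
  exact hconv.eq_of_isMinOn (hsq hs) (hsq ht) left_mem_uIcc right_mem_uIcc

theorem exists_pos_eq_of_dist_eq_infDist_image_Icc {γ : ℝ → E} {a b : ℝ}
    (hγ : ContDiff ℝ 2 γ) (hinj : InjOn γ (Icc a b)) (hunit : ∀ s ∈ Icc a b, ‖deriv γ s‖ = 1) :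
    ∃ ε > 0, ∀ x, infDist x (γ '' Icc a b) < ε →
      ∀ y ∈ γ '' Icc a b, dist x y = infDist x (γ '' Icc a b) →
      ∀ z ∈ γ '' Icc a b, dist x z = infDist x (γ '' Icc a b) → z = y := by
  obtain ⟨K, hK⟩ := isCompact_Icc.exists_bound_of_continuousOn (f := deriv^[2] γ) (s := Icc a b)
    (by rw [← iteratedDeriv_eq_iterate]; exact (hγ.continuous_iteratedDeriv 2 le_rfl).continuousOn)
  replace hK : ∀ u ∈ Icc a b, ‖deriv^[2] γ u‖ ≤ |K| := fun u hu => (hK u hu).trans (le_abs_self K)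
  set η := 1 / (2 * (|K| + 1))
  have hη : 0 < η := by positivity
  have hηK : 2 * η * |K| < 1 := by
    simp only [η]
    field_simp
    linarith
  obtain ⟨c, hc, hsep⟩ := hinj.exists_pos_le_dist_image isCompact_Icc
    hγ.continuous.continuousOn hη
  refine ⟨min (c / 2) η, by positivity, ?_⟩
  rintro x hx _ ⟨s, hs, rfl⟩ hxs _ ⟨t, ht, rfl⟩ hxt
  obtain ⟨hxc, hxη⟩ := lt_min_iff.1 hx
  have hmin {v : ℝ} (hv : v ∈ Icc a b) (hxv : dist x (γ v) = infDist x (γ '' Icc a b)) :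
      IsMinOn (fun u => dist (γ u) x) (Icc a b) v :=
    isMinOn_iff.2 fun u hu => by
      rw [dist_comm, hxv, dist_comm]
      exact infDist_le_dist_of_mem (mem_image_of_mem γ hu)
  by_cases hst : η ≤ dist t s
  · refine absurd ?_ (lt_irrefl c)
    calc c ≤ dist (γ t) (γ s) := hsep t ht s hs hst
      _ ≤ dist x (γ t) + dist x (γ s) := dist_triangle_left _ _ _
      _ < c := by rw [hxs, hxt]; linarith
  · have hsub := uIcc_subset_Icc hs ht
    refine congrArg γ (eq_of_isMinOn_dist_uIcc hγ (fun u hu => hunit u (hsub hu))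
      (fun u hu => hK u (hsub hu)) ?_ ((hmin hs hxs).on_subset hsub)
      ((hmin ht hxt).on_subset hsub)).symm
    rw [dist_comm, hxs, ← Real.dist_eq]
    calc (infDist x (γ '' Icc a b) + dist t s) * |K| ≤ (2 * η) * |K| := by gcongr; linarith
      _ < 1 := hηK

/-- Unique nearest point on a C² injective compact curve near the curve, and
continuity of the nearest-point assignment. -/
theorem unique_nearest_point_continuous_of_C2_curve
    (γ : ℝ → E3) (L : ℝ) (hL : 0 < L)
    (hγ : ContDiff ℝ 2 γ) (hγinj : Set.InjOn γ (Set.Icc 0 L))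
    (harc : ∀ s ∈ Set.Icc (0:ℝ) L, ‖deriv γ s‖ = 1)
    (C : Set E3) (hC : C = γ '' Set.Icc 0 L) :
    ∃ ε > 0,
      (∀ x : E3, Metric.infDist x C < ε →
        ∃! y, y ∈ C ∧ dist x y = Metric.infDist x C) ∧
      (∀ x : E3, Metric.infDist x C < ε →
        ∀ y ∈ C, dist x y = Metric.infDist x C →
          ∀ δ > 0, ∃ ρ > 0, ∀ x' : E3, dist x' x < ρ →
            ∀ y' ∈ C, dist x' y' = Metric.infDist x' C → dist y' y < δ) := by
  subst hC
  have hcompact : IsCompact (γ '' Icc 0 L) := isCompact_Icc.image hγ.continuous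
  have hne : (γ '' Icc 0 L).Nonempty := (nonempty_Icc.2 hL.le).image γ
  obtain ⟨ε, hε, huniq⟩ := exists_pos_eq_of_dist_eq_infDist_image_Icc hγ hγinj harc
  refine ⟨ε, hε, fun x hx => ?_, fun x hx y hy hxy δ hδ =>
    hcompact.exists_pos_nearest_dist_lt (huniq x hx y hy hxy) hδ⟩
  obtain ⟨y, hy, hxy⟩ := hcompact.exists_infDist_eq_dist hne x
  exact ⟨y, ⟨hy, hxy.symm⟩, fun z ⟨hz, hxz⟩ => huniq x hx y hy hxy.symm z hz hxz⟩
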